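/- Define V₂(λ) = ∏_{k≥2} (1 + λ²/(k²π²))^{-n/2} for λ ∈ ℂ with λ² interpreted as the complex square, and n ≥ 1 an integer. Then for all real λ and all real θ with |θ| < 2π, one has |V₂(λ + iθ)| ≤ V₂(λ) · V₂(iθ). -/

import Mathlib

open Real

/-- `V₂(z) = ∏_{k≥2} (1 + z²/(k²π²))^{-n/2}` for complex `z`. -/
noncomputable def Vtwo (n : ℕ) (z : ℂ) : ℂ :=
  ∏' k : ℕ, (1 + z ^ 2 / (((k : ℂ) + 2) ^ 2 * (π : ℂ) ^ 2)) ^ (-(n : ℂ) / 2)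

/-! ### Auxiliary definitions and lemmas -/

noncomputable def bC (l θ : ℝ) (k : ℕ) : ℂ :=
  1 + ((l:ℂ) + θ * Complex.I) ^ 2 / (((k : ℂ) + 2) ^ 2 * (π : ℂ) ^ 2)

noncomputable def aR (k : ℕ) : ℝ := ((k:ℝ) + 2) ^ 2 * π ^ 2

noncomputable def cC (n : ℕ) (l θ : ℝ) (k : ℕ) : ℂ :=
  Complex.log (bC l θ k) * (-(n:ℂ)/2)

lemma aR_pos (k : ℕ) : 0 < aR k := by
  unfold aR
  positivity

lemma bC_eq (l θ : ℝ) (k : ℕ) :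
    bC l θ k = ((1 + (l^2 - θ^2) / aR k : ℝ) : ℂ) + ((2*l*θ/aR k : ℝ) : ℂ) * Complex.I := by
  have ha : (aR k : ℂ) ≠ 0 := by exact_mod_cast (aR_pos k).ne'
  have hc : (((k : ℂ) + 2) ^ 2 * (π : ℂ) ^ 2) = (aR k : ℂ) := by
    rw [aR]; push_cast; ring
  rw [bC, hc]
  push_cast
  field_simp
  ring_nf
  rw [Complex.I_sq]
  ring

lemma four_pi_sq_le_aR (k : ℕ) : 4 * π ^ 2 ≤ aR k := by
  unfold aR
  have h2 : (2:ℝ) ≤ (k:ℝ) + 2 := by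
    have : (0:ℝ) ≤ (k:ℝ) := Nat.cast_nonneg k
    linarith
  have h4 : (4:ℝ) ≤ ((k:ℝ)+2)^2 := by nlinarith
  nlinarith [sq_nonneg π]

lemma theta_lt (θ : ℝ) (k : ℕ) (hθ : θ^2 < 4*π^2) : θ^2 / aR k < 1 :=
  (div_lt_one (aR_pos k)).2 (hθ.trans_le (four_pi_sq_le_aR k))

lemma rhs_pos (l θ : ℝ) (k : ℕ) (hθ : θ^2 < 4*π^2) :
    0 < (1 + l^2 / aR k) * (1 - θ^2 / aR k) := by
  have h1 := theta_lt θ k hθ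
  have h2 : 0 ≤ l^2 / aR k := div_nonneg (sq_nonneg l) (aR_pos k).le
  nlinarith

lemma key_abs (l θ : ℝ) (k : ℕ) (hθ : θ^2 < 4*π^2) :
    (1 + l^2 / aR k) * (1 - θ^2 / aR k) ≤ ‖bC l θ k‖ := by
  set a := aR k with ha
  have hapos := aR_pos k
  have hB := theta_lt θ k hθ
  rw [bC_eq, Complex.norm_def, Complex.normSq_add_mul_I]
  set A := l^2 / a with hA
  set B := θ^2 / a with hB'
  have hA0 : 0 ≤ A := div_nonneg (sq_nonneg l) hapos.le
  have hB0 : 0 ≤ B := div_nonneg (sq_nonneg θ) hapos.le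
  have hx : 1 + (l^2 - θ^2)/a = 1 + A - B := by rw [hA, hB']; ring
  have hy : (2*l*θ/a)^2 = 4 * A * B := by rw [hA, hB']; field_simp; ring
  rw [hx]
  refine (Real.le_sqrt (le_of_lt (rhs_pos l θ k hθ)) (by positivity)).2 ?_
  rw [hy]
  nlinarith [mul_nonneg hA0 hB0, mul_nonneg (mul_nonneg hA0 hB0) (sub_nonneg.2 hB.le),
    mul_nonneg (mul_nonneg hA0 hB0) hA0]

lemma bC_ne (l θ : ℝ) (k : ℕ) (hθ : θ^2 < 4*π^2) : bC l θ k ≠ 0 := by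
  intro h
  have := key_abs l θ k hθ
  rw [h] at this
  simp at this
  nlinarith [rhs_pos l θ k hθ]

lemma norm_w (l θ : ℝ) (k : ℕ) :
    ‖((l:ℂ) + θ * Complex.I) ^ 2 / (((k : ℂ) + 2) ^ 2 * (π : ℂ) ^ 2)‖
      = ‖(l:ℂ) + θ * Complex.I‖ ^ 2 / aR k := by
  have hc : (((k : ℂ) + 2) ^ 2 * (π : ℂ) ^ 2) = ((aR k : ℝ) : ℂ) := by
    rw [aR]; push_cast; ring
  rw [hc, norm_div, norm_pow, Complex.norm_real, Real.norm_eq_abs, abs_of_pos (aR_pos k)]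

lemma summable_inv_sq : Summable (fun k : ℕ => 1 / ((k:ℝ) + 2) ^ 2) := by
  have h := (summable_nat_add_iff 2).2 (Real.summable_one_div_nat_pow.2 one_lt_two)
  refine h.congr fun k => ?_
  push_cast
  ring

lemma summable_cC (n : ℕ) (l θ : ℝ) : Summable (cC n l θ) := by
  set z := (l:ℂ) + θ * Complex.I with hz
  have hπ1 : (1:ℝ) ≤ π ^ 2 := by nlinarith [Real.pi_gt_three]
  refine Summable.of_norm_bounded_eventually_nat
    (g := fun k => ((n:ℝ) * (3/4) * ‖z‖ ^ 2 / π ^ 2) * (1 / ((k:ℝ)+2)^2))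
    (summable_inv_sq.mul_left _) ?_
  rw [Filter.eventually_atTop]
  refine ⟨⌈2 * ‖z‖ ^ 2⌉₊, fun k hk => ?_⟩
  have haR := aR_pos k
  have hk2 : 2 * ‖z‖ ^ 2 ≤ aR k := by
    have h1 : 2 * ‖z‖ ^ 2 ≤ (k:ℝ) := le_trans (Nat.le_ceil _) (Nat.cast_le.2 hk)
    have h2 : (k:ℝ) ≤ ((k:ℝ)+2)^2 := by nlinarith [Nat.cast_nonneg (α := ℝ) k]
    calc 2 * ‖z‖ ^ 2 ≤ ((k:ℝ)+2)^2 := by linarith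
      _ = ((k:ℝ)+2)^2 * 1 := by ring
      _ ≤ aR k := by rw [aR]; exact mul_le_mul_of_nonneg_left hπ1 (by positivity)
  set w := z ^ 2 / (((k : ℂ) + 2) ^ 2 * (π : ℂ) ^ 2) with hw
  have hwn : ‖w‖ = ‖z‖ ^ 2 / aR k := norm_w l θ k
  have hwhalf : ‖w‖ ≤ 1/2 := by
    rw [hwn, div_le_iff₀ haR]; linarith
  have hlog : ‖Complex.log (1 + w)‖ ≤ 3/2 * ‖w‖ :=
    Complex.norm_log_one_add_half_le_self hwhalf
  have hbw : bC l θ k = 1 + w := rfl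
  have hnc : ‖cC n l θ k‖ = ‖Complex.log (1 + w)‖ * ((n:ℝ)/2) := by
    rw [cC, hbw, norm_mul]
    congr 1
    rw [norm_div, Complex.norm_two, norm_neg, Complex.norm_natCast]
  rw [hnc]
  have hn2 : (0:ℝ) ≤ (n:ℝ)/2 := by positivity
  calc ‖Complex.log (1 + w)‖ * ((n:ℝ)/2) ≤ (3/2 * ‖w‖) * ((n:ℝ)/2) :=
        mul_le_mul_of_nonneg_right hlog hn2
    _ = ((n:ℝ) * (3/4) * ‖z‖ ^ 2 / π ^ 2) * (1 / ((k:ℝ)+2)^2) := by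
        rw [hwn, aR]; field_simp; ring

lemma Vtwo_eq_exp (n : ℕ) (l θ : ℝ) (hθ : θ^2 < 4*π^2) :
    Vtwo n ((l:ℂ) + θ * Complex.I) = Complex.exp (∑' k, cC n l θ k) := by
  rw [Vtwo]
  have h1 : ∀ k : ℕ, (1 + ((l:ℂ) + θ * Complex.I) ^ 2 / (((k : ℂ) + 2) ^ 2 * (π : ℂ) ^ 2))
      ^ (-(n : ℂ) / 2) = Complex.exp (cC n l θ k) := fun k =>
    Complex.cpow_def_of_ne_zero (bC_ne l θ k hθ) _
  rw [tprod_congr h1]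
  exact ((summable_cC n l θ).hasSum.cexp).tprod_eq

lemma cC_re (n : ℕ) (l θ : ℝ) (k : ℕ) :
    (cC n l θ k).re = Real.log (‖bC l θ k‖) * (-(n:ℝ)/2) := by
  have h : (-(n:ℂ)/2) = ((-(n:ℝ)/2 : ℝ) : ℂ) := by push_cast; ring
  rw [cC, h, Complex.mul_re, Complex.ofReal_re, Complex.ofReal_im, Complex.log_re]
  ring

lemma abs_Vtwo_eq (n : ℕ) (l θ : ℝ) (hθ : θ^2 < 4*π^2) :
    ‖Vtwo n ((l:ℂ) + θ * Complex.I)‖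
      = Real.exp (∑' k, Real.log (‖bC l θ k‖) * (-(n:ℝ)/2)) := by
  rw [Vtwo_eq_exp n l θ hθ, Complex.norm_exp, Complex.re_tsum (summable_cC n l θ)]
  congr 1
  exact tsum_congr fun k => cC_re n l θ k

lemma summable_re (n : ℕ) (l θ : ℝ) :
    Summable (fun k => Real.log (‖bC l θ k‖) * (-(n:ℝ)/2)) := by
  have h := (Complex.hasSum_re (summable_cC n l θ).hasSum).summable
  exact h.congr fun k => (cC_re n l θ k)

lemma abs_bC_right (l θ : ℝ) (k : ℕ) (hθ : θ^2 < 4*π^2) :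
    ‖bC l 0 k‖ = 1 + l^2 / aR k ∧
    ‖bC 0 θ k‖ = 1 - θ^2 / aR k := by
  constructor
  · rw [bC_eq]
    have h0 : (1 + (l^2 - 0^2) / aR k : ℝ) = 1 + l^2 / aR k := by ring
    have h1 : (2*l*0/aR k : ℝ) = 0 := by ring
    rw [h0, h1]
    simp only [Complex.ofReal_zero, zero_mul, add_zero, Complex.norm_real, Real.norm_eq_abs]
    have : 0 ≤ l^2 / aR k := div_nonneg (sq_nonneg l) (aR_pos k).le
    exact abs_of_nonneg (by linarith)
  · rw [bC_eq]
    have h0 : (1 + (0^2 - θ^2) / aR k : ℝ) = 1 - θ^2 / aR k := by ring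
    have h1 : (2*0*θ/aR k : ℝ) = 0 := by ring
    rw [h0, h1]
    simp only [Complex.ofReal_zero, zero_mul, add_zero, Complex.norm_real, Real.norm_eq_abs]
    have := theta_lt θ k hθ
    exact abs_of_nonneg (by linarith)

/-- Submultiplicative bound: for all real `λ` and real `θ` with `|θ| < 2π`,
`|V₂(λ + iθ)| ≤ V₂(λ) · V₂(iθ)`. -/
theorem abs_Vtwo_le (n : ℕ) (hn : 1 ≤ n) (l θ : ℝ) (hθ : |θ| < 2 * π) :
    ‖Vtwo n ((l : ℂ) + θ * Complex.I)‖ ≤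
      ‖Vtwo n (l : ℂ)‖ * ‖Vtwo n (θ * Complex.I)‖ := by
  have hπ := Real.pi_pos
  have hθ2 : θ^2 < 4*π^2 := by
    have h1 := mul_self_lt_mul_self (abs_nonneg θ) hθ
    nlinarith [sq_abs θ]
  have h02 : (0:ℝ)^2 < 4*π^2 := by nlinarith
  have e1 : (l : ℂ) = (l:ℂ) + (0:ℝ) * Complex.I := by push_cast; ring
  have e2 : (θ:ℂ) * Complex.I = ((0:ℝ):ℂ) + (θ:ℝ) * Complex.I := by push_cast; ring
  conv_rhs => rw [e1, e2]
  rw [abs_Vtwo_eq n l θ hθ2, abs_Vtwo_eq n l 0 h02, abs_Vtwo_eq n 0 θ hθ2,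
    ← Real.exp_add]
  rw [Real.exp_le_exp]
  rw [← Summable.tsum_add (summable_re n l 0) (summable_re n 0 θ)]
  refine Summable.tsum_le_tsum (fun k => ?_) (summable_re n l θ)
    ((summable_re n l 0).add (summable_re n 0 θ))
  have hL := (abs_bC_right l θ k hθ2).1
  have hR := (abs_bC_right l θ k hθ2).2
  rw [hL, hR, ← add_mul]
  have hn2 : (-(n:ℝ)/2) ≤ 0 := by
    have : (0:ℝ) ≤ n := Nat.cast_nonneg n
    linarith
  apply mul_le_mul_of_nonpos_right ?_ hn2
  have hA : 0 < 1 + l^2 / aR k := by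
    have : 0 ≤ l^2 / aR k := div_nonneg (sq_nonneg l) (aR_pos k).le
    linarith
  have hB : 0 < 1 - θ^2 / aR k := by
    have := theta_lt θ k hθ2
    linarith
  rw [← Real.log_mul hA.ne' hB.ne']
  exact Real.log_le_log (rhs_pos l θ k hθ2) (key_abs l θ k hθ2)
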